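/- Non-resonance of the harmonics m ∉ {0,1}: let γ ∈ (0,1/4), 0 < r < γ/2, and let p : ℝ → ℝ satisfy 0 ≤ p(ξ) ≤ 1 for all ξ. Then for every m ∈ ℤ with m ≠ 0 and m ≠ 1, and for all (s,y,ξ) ∈ (0,∞) × (−r,r) × ℝ, one has |p(ξ) − m + m·y + γ·m·sin s| + |ξ − m·s| ≥ 1/4; that is, the phase m·φ, with φ(t,x) := t − x·t + γ(cos t − 1), is non-resonant with constant η = 1/4 on the domain 𝒩 = (0,∞) × (−r,r) × ℝ. -/
import Mathlib


open Real Set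

/-- Non-resonance of the harmonics `m ∉ {0,1}` for the phase
`φ(t,x) = t - x t + γ (cos t - 1)`: for every integer `m ≠ 0, 1` and all
`(s,y,ξ) ∈ (0,∞) × (-r,r) × ℝ`, the non-resonance inequality holds with
constant `η = 1/4`. -/
theorem nonresonant_harmonics
    (γ r : ℝ) (hγ : γ ∈ Set.Ioo (0:ℝ) (1/4)) (hr0 : 0 < r) (hr : r < γ / 2)
    (p : ℝ → ℝ) (hp : ∀ ξ, p ξ ∈ Set.Icc (0:ℝ) 1)
    (m : ℤ) (hm0 : m ≠ 0) (hm1 : m ≠ 1) :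
    ∀ s y ξ : ℝ, 0 < s → y ∈ Set.Ioo (-r) r →
      (1/4 : ℝ) ≤ |p ξ - (m:ℝ) + (m:ℝ) * y + γ * (m:ℝ) * Real.sin s|
        + |ξ - (m:ℝ) * s| := by
  intro s y ξ hs hy
  have hp1 := (hp ξ).1
  have hp2 := (hp ξ).2
  have hsin1 := Real.sin_le_one s
  have hsin2 := Real.neg_one_le_sin s
  have hy1 : -r < y := hy.1
  have hy2 : y < r := hy.2
  have hγ1 : 0 < γ := hγ.1
  have hγ2 : γ < 1/4 := hγ.2
  have habs2 : (0:ℝ) ≤ |ξ - (m:ℝ) * s| := abs_nonneg _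
  have hM : (m:ℝ) ≤ -1 ∨ (2:ℝ) ≤ (m:ℝ) := by
    rcases lt_or_ge m 1 with h | h
    · left; exact_mod_cast (by omega : m ≤ -1)
    · right; exact_mod_cast (by omega : (2:ℤ) ≤ m)
  have key : (1/4:ℝ) ≤ |p ξ - (m:ℝ) + (m:ℝ) * y + γ * (m:ℝ) * Real.sin s| := by
    rcases hM with h | h
    · have hA : (1/4:ℝ) ≤ p ξ - (m:ℝ) + (m:ℝ) * y + γ * (m:ℝ) * Real.sin s := by
        nlinarith [mul_nonneg hγ1.le (mul_nonneg (by linarith : (0:ℝ) ≤ -(m:ℝ)) (by linarith : (0:ℝ) ≤ 1 - Real.sin s)),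
          mul_nonneg (by linarith : (0:ℝ) ≤ -(m:ℝ)) (by linarith : (0:ℝ) ≤ r - y)]
      calc (1/4:ℝ) ≤ p ξ - (m:ℝ) + (m:ℝ) * y + γ * (m:ℝ) * Real.sin s := hA
        _ ≤ _ := le_abs_self _
    · have hA : p ξ - (m:ℝ) + (m:ℝ) * y + γ * (m:ℝ) * Real.sin s ≤ -(1/4:ℝ) := by
        nlinarith [mul_nonneg hγ1.le (mul_nonneg (by linarith : (0:ℝ) ≤ (m:ℝ)) (by linarith : (0:ℝ) ≤ 1 - Real.sin s)),
          mul_nonneg (by linarith : (0:ℝ) ≤ (m:ℝ)) (by linarith : (0:ℝ) ≤ r - y)]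
      calc (1/4:ℝ) ≤ -(p ξ - (m:ℝ) + (m:ℝ) * y + γ * (m:ℝ) * Real.sin s) := by linarith
        _ ≤ _ := neg_le_abs _
  linarith
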